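/- With Ξ[Q̃] = 8 Q̃₁₂² + 2 Q̃₁₃² + 2 Q̃₂₃² + 2(Q̃₁₁ − Q̃₂₂)² for a symmetric traceless matrix Q̃, one has Ξ[Q̃] ≤ 4 dist²(Q̃, ℝ·Q∞), where Q∞ = e₃⊗e₃ − (1/3)I and dist denotes Frobenius-norm distance to the line spanned by Q∞. -/
import Mathlib


open Matrix

/-- The azimuthal energy density. -/
noncomputable def Xi (Q : Matrix (Fin 3) (Fin 3) ℝ) : ℝ :=
  8 * Q 0 1 ^ 2 + 2 * Q 0 2 ^ 2 + 2 * Q 1 2 ^ 2 + 2 * (Q 0 0 - Q 1 1)^2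

/-- The far-field tensor `e₃ ⊗ e₃ - (1/3) I`. -/
noncomputable def Qinf : Matrix (Fin 3) (Fin 3) ℝ :=
  !![-(1/3), 0, 0; 0, -(1/3), 0; 0, 0, 2/3]

/-- Frobenius norm of a `3×3` real matrix. -/
noncomputable def frobNorm (A : Matrix (Fin 3) (Fin 3) ℝ) : ℝ :=
  Real.sqrt (∑ i, ∑ j, (A i j)^2)

theorem stmt7 (Q : Matrix (Fin 3) (Fin 3) ℝ) (hsym : Q.IsSymm) (htr : Q.trace = 0) :
    Xi Q ≤ 4 * (⨅ t : ℝ, frobNorm (Q - t • Qinf))^2 := by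
  have h10 : Q 1 0 = Q 0 1 := hsym.apply 0 1
  have h20 : Q 2 0 = Q 0 2 := hsym.apply 0 2
  have h21 : Q 2 1 = Q 1 2 := hsym.apply 1 2
  have htr' : Q 0 0 + Q 1 1 + Q 2 2 = 0 := by
    simpa [Matrix.trace_fin_three] using htr
  have hXi : 0 ≤ Xi Q := by unfold Xi; positivity
  set c := Real.sqrt (Xi Q / 4) with hcdef
  have hc : ∀ t : ℝ, c ≤ frobNorm (Q - t • Qinf) := by
    intro t
    unfold frobNorm
    apply Real.sqrt_le_sqrt
    rw [Fin.sum_univ_three]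
    simp [Fin.sum_univ_three, Matrix.sub_apply, Matrix.smul_apply, Qinf, Xi,
      Matrix.cons_val_zero, Matrix.cons_val_one, Matrix.head_cons,
      Matrix.cons_val_two, Matrix.tail_cons, smul_eq_mul]
    rw [h10, h20, h21]
    nlinarith [sq_nonneg (Q 0 2), sq_nonneg (Q 1 2), htr',
      sq_nonneg (3 * (Q 0 0 + Q 1 1) + 2 * t)]
  have hinf : c ≤ ⨅ t, frobNorm (Q - t • Qinf) := le_ciInf hc
  have hc0 : 0 ≤ c := Real.sqrt_nonneg _
  have hsq : c ^ 2 ≤ (⨅ t, frobNorm (Q - t • Qinf)) ^ 2 :=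
    pow_le_pow_left₀ hc0 hinf 2
  have hc2 : c ^ 2 = Xi Q / 4 := Real.sq_sqrt (by linarith)
  linarith
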